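/- Let n = 2^k and let S be the conditional shift operator on C^{⌊n/2⌋+1} ⊗ C^2 ⊗ C^n. Suppose Magnus plays unitaries M_i preparing his register in basis state |m_i⟩ according to any fixed classical sequence, and Derek plays D_1 = H (Hadamard) on his direction register at step 1 and identity afterwards, starting from |0⟩⊗|0⟩⊗|0⟩. Then after any number t ≥ 1 of steps, the reduced state of the position register assigns probability at most 1/2 to each basis position other than those reachable identically in both branches; in particular at most two positions are ever 'visited' (measured with probability 1). -/

import Mathlib

/-! After the Hadamard step the walk is an equal superposition of two branches: direction `0`
at position `S t = ∑ i < t, m i` and direction `1` at `-S t`, each with amplitude `1/√2`.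
Hence a position has probability `1` only if both branches meet there, i.e. `x = S t = -S t`,
so every visited position is a solution of `x + x = 0`; since `ZMod n` is cyclic there are at most
two of them. -/

open scoped BigOperators

/-- The joint state (direction register ⊗ position register) of the walk where
Magnus plays the classical magnitude sequence `m` and Derek applies the
Hadamard gate at step 1 and the identity afterwards, starting from `|0⟩⊗|0⟩`;
each step concludes with the conditional shift by `± m t`. -/
noncomputable def hadamardWalk (n : ℕ) (m : ℕ → ZMod n) : ℕ → Fin 2 × ZMod n → ℂ
  | 0 => fun p => if p = (0, 0) then 1 else 0
  | 1 => fun p =>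
      if p = (0, m 0) then ((1 / Real.sqrt 2 : ℝ) : ℂ)
      else if p = (1, - m 0) then ((1 / Real.sqrt 2 : ℝ) : ℂ) else 0
  | t + 2 => fun p =>
      if p.1 = 0 then hadamardWalk n m (t + 1) (0, p.2 - m (t + 1))
      else hadamardWalk n m (t + 1) (1, p.2 + m (t + 1))

open Finset

lemma ZMod.encard_setOf_add_self_eq_zero_le_two (n : ℕ) :
    {x : ZMod n | x + x = 0}.encard ≤ 2 := by
  rcases n with _ | n
  · calc {x : ℤ | x + x = 0}.encard ≤ ({0} : Set ℤ).encard :=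
          Set.encard_le_encard fun x (hx : x + x = 0) => by simp; omega
      _ ≤ 2 := by simp
  · classical
    have h : (#{x : ZMod (n + 1) | 2 • x = 0} : ℕ∞) ≤ 2 := by
      exact_mod_cast IsAddCyclic.card_nsmul_eq_zero_le (α := ZMod (n + 1)) two_pos
    rw [← Set.encard_coe_eq_coe_finsetCard, coe_filter] at h
    simpa only [mem_univ, true_and, two_nsmul] using h

section
variable {n : ℕ} (m : ℕ → ZMod n)

lemma hadamardWalk_succ_zero (t : ℕ) (x : ZMod n) :
    hadamardWalk n m (t + 1) (0, x) =
      if x = ∑ i ∈ range (t + 1), m i then ((1 / Real.sqrt 2 : ℝ) : ℂ) else 0 := by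
  induction t generalizing x with
  | zero => simp [hadamardWalk]
  | succ t ih =>
    dsimp only [hadamardWalk]
    simp only [if_pos, ih, sum_range_succ _ (t + 1), sub_eq_iff_eq_add]

lemma hadamardWalk_succ_one (t : ℕ) (x : ZMod n) :
    hadamardWalk n m (t + 1) (1, x) =
      if x = -∑ i ∈ range (t + 1), m i then ((1 / Real.sqrt 2 : ℝ) : ℂ) else 0 := by
  induction t generalizing x with
  | zero => simp [hadamardWalk]
  | succ t ih =>
    dsimp only [hadamardWalk]
    simp only [one_ne_zero, if_false, ih, sum_range_succ _ (t + 1), neg_add,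
      ← sub_eq_add_neg, eq_sub_iff_add_eq]

lemma sum_norm_sq_hadamardWalk_succ (t : ℕ) (x : ZMod n) :
    ∑ d : Fin 2, ‖hadamardWalk n m (t + 1) (d, x)‖ ^ 2 =
      (if x = ∑ i ∈ range (t + 1), m i then 1 / 2 else 0) +
        (if x = -∑ i ∈ range (t + 1), m i then 1 / 2 else 0) := by
  rw [Fin.sum_univ_two, hadamardWalk_succ_zero, hadamardWalk_succ_one]
  split_ifs <;> simp [Complex.norm_real]

lemma sum_norm_sq_hadamardWalk_succ_le_half {t : ℕ} {x : ZMod n}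
    (hx : ¬(x = ∑ i ∈ range (t + 1), m i ∧ x = -∑ i ∈ range (t + 1), m i)) :
    ∑ d : Fin 2, ‖hadamardWalk n m (t + 1) (d, x)‖ ^ 2 ≤ 1 / 2 := by
  rw [sum_norm_sq_hadamardWalk_succ]
  split_ifs <;> first | tauto | norm_num

lemma add_self_eq_zero_of_sum_norm_sq_hadamardWalk_eq_one {t : ℕ} {x : ZMod n}
    (h : ∑ d : Fin 2, ‖hadamardWalk n m t (d, x)‖ ^ 2 = 1) : x + x = 0 := by
  rcases t with _ | t
  · have hx : x = 0 := by
      by_contra hx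
      simp [hadamardWalk, hx] at h
    simp [hx]
  · by_contra hxx
    have hx : ¬(x = ∑ i ∈ range (t + 1), m i ∧ x = -∑ i ∈ range (t + 1), m i) := by
      rintro ⟨hS, hnS⟩
      exact hxx (by linear_combination hS + hnS)
    linarith [sum_norm_sq_hadamardWalk_succ_le_half m hx]

end

theorem stmt_8_general (n : ℕ) (m : ℕ → ZMod n) :
    (∀ t : ℕ, 1 ≤ t → ∀ x : ZMod n,
      ¬(x = ∑ i ∈ Finset.range t, m i ∧ x = -∑ i ∈ Finset.range t, m i) →
      ∑ d : Fin 2, ‖hadamardWalk n m t (d, x)‖ ^ 2 ≤ 1 / 2) ∧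
    ({x : ZMod n | ∃ t : ℕ, ∑ d : Fin 2, ‖hadamardWalk n m t (d, x)‖ ^ 2 = 1}.ncard ≤ 2) := by
  refine ⟨fun t ht x hx => ?_, ?_⟩
  · obtain ⟨t, rfl⟩ := Nat.exists_eq_add_of_le' ht
    exact sum_norm_sq_hadamardWalk_succ_le_half m hx
  · have hvisited : {x : ZMod n | ∃ t : ℕ, ∑ d : Fin 2, ‖hadamardWalk n m t (d, x)‖ ^ 2 = 1} ⊆
        {x | x + x = 0} :=
      fun _ ⟨_, ht⟩ => add_self_eq_zero_of_sum_norm_sq_hadamardWalk_eq_one m ht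
    exact (Set.encard_le_coe_iff_finite_ncard_le.mp <|
      (Set.encard_le_encard hvisited).trans (ZMod.encard_setOf_add_self_eq_zero_le_two n)).2

/-- With `n = 2^k` and Derek playing a single Hadamard followed by identities,
at every step `t ≥ 1` each position `x` other than one reached identically in
both branches (`x = Σ_{i<t} m i = -Σ_{i<t} m i`) carries probability at most
`1/2`; in particular at most two positions are ever visited (probability 1). -/
theorem stmt_8 (k n : ℕ) (hk : 1 ≤ k) (hn : n = 2 ^ k) (m : ℕ → ZMod n) :
    (∀ t : ℕ, 1 ≤ t → ∀ x : ZMod n,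
      ¬(x = ∑ i ∈ Finset.range t, m i ∧ x = -∑ i ∈ Finset.range t, m i) →
      ∑ d : Fin 2, ‖hadamardWalk n m t (d, x)‖ ^ 2 ≤ 1 / 2) ∧
    ({x : ZMod n | ∃ t : ℕ, ∑ d : Fin 2, ‖hadamardWalk n m t (d, x)‖ ^ 2 = 1}.ncard ≤ 2) :=
  stmt_8_general n m
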